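/- Let R be a local topological ring that is Hausdorff, in which R^× is open in R, is a topological group in its subspace topology, and is closed in R (e.g., R could be a valuation ring with its valuation topology), and fix a topologization of rational points over R. Then for every quasi-compact immersion f : X → Y of locally of finite type R-schemes, the induced map f(R) : X(R) → Y(R) is a closed topological embedding. -/

import Mathlib

open AlgebraicGeometry CategoryTheory CategoryTheory.Limits Topology

noncomputable section

/-- `Spec R`, as a scheme, for a commutative ring `R`. -/
abbrev SpecR (R : Type) [CommRing R] : Scheme := Spec (CommRingCat.of R)

/-- The set of `R`-points of a scheme `X` over `Spec R` with structure morphism `f`,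
i.e. the set of sections of `f`. -/
def Pts {R : Type} [CommRing R] {X : Scheme} (f : X ⟶ SpecR R) : Type :=
  { s : SpecR R ⟶ X // s ≫ f = 𝟙 (SpecR R) }

/-- The map on `R`-points induced by a morphism `g` of schemes over `Spec R`. -/
def Pts.map {R : Type} [CommRing R] {X X' : Scheme} {f : X ⟶ SpecR R} {f' : X' ⟶ SpecR R}
    (g : X ⟶ X') (w : g ≫ f' = f) (s : Pts f) : Pts f' :=
  ⟨s.1 ≫ g, by rw [Category.assoc, w, s.2]⟩

/-- Affine `n`-space over `R`. -/
abbrev AffineN (R : Type) [CommRing R] (n : ℕ) : Scheme :=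
  Spec (CommRingCat.of (MvPolynomial (Fin n) R))

/-- The structure morphism of affine `n`-space over `R`. -/
def AffineNStr (R : Type) [CommRing R] (n : ℕ) : AffineN R n ⟶ SpecR R :=
  Spec.map (CommRingCat.ofHom (algebraMap R (MvPolynomial (Fin n) R)))

/-- The canonical identification `𝔸ⁿ(R) = Rⁿ`, sending a section to its coordinates. -/
def affineCoords (R : Type) [CommRing R] (n : ℕ) (s : Pts (AffineNStr R n)) : Fin n → R :=
  fun i => Spec.preimage s.1 (MvPolynomial.X i)

/-- A topologization of rational points over `R`: an assignment of a topology to `X(R)`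
for every locally of finite type `R`-scheme `X`, satisfying (i)–(iv). -/
structure PointsTopology (R : Type) [CommRing R] [TopologicalSpace R] : Type 1 where
  /-- the topology on `X(R)` -/
  top : ∀ {X : Scheme} (f : X ⟶ SpecR R), LocallyOfFiniteType f → TopologicalSpace (Pts f)
  /-- (i) every `R`-morphism induces a continuous map on `R`-points -/
  continuous_map : ∀ {X X' : Scheme} {f : X ⟶ SpecR R} {f' : X' ⟶ SpecR R}
      (hf : LocallyOfFiniteType f) (hf' : LocallyOfFiniteType f') (g : X ⟶ X') (w : g ≫ f' = f),
      letI := top f hf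
      letI := top f' hf'
      Continuous (Pts.map g w)
  /-- (ii) the canonical bijection `𝔸ⁿ(R) = Rⁿ` is a homeomorphism -/
  affine_homeo : ∀ (n : ℕ) (h : LocallyOfFiniteType (AffineNStr R n)),
      letI := top (AffineNStr R n) h
      IsHomeomorph (affineCoords R n)
  /-- (iii) closed immersions induce topological embeddings on `R`-points -/
  closedImmersion_isEmbedding : ∀ {X X' : Scheme} {f : X ⟶ SpecR R} {f' : X' ⟶ SpecR R}
      (hf : LocallyOfFiniteType f) (hf' : LocallyOfFiniteType f') (g : X ⟶ X')
      (w : g ≫ f' = f), IsClosedImmersion g →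
      letI := top f hf
      letI := top f' hf'
      IsEmbedding (Pts.map g w)
  /-- (iv) open immersions induce open topological embeddings on `R`-points -/
  openImmersion_isOpenEmbedding : ∀ {X X' : Scheme} {f : X ⟶ SpecR R} {f' : X' ⟶ SpecR R}
      (hf : LocallyOfFiniteType f) (hf' : LocallyOfFiniteType f') (g : X ⟶ X')
      (w : g ≫ f' = f), IsOpenImmersion g →
      letI := top f hf
      letI := top f' hf'
      IsOpenEmbedding (Pts.map g w)

/-- `R` is étale-open: étale morphisms of locally of finite type `R`-schemes
induce open maps on `R`-points. -/
def EtaleOpen {R : Type} [CommRing R] [TopologicalSpace R] (T : PointsTopology R) : Prop :=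
  ∀ {X Y : Scheme} {f : X ⟶ SpecR R} {g : Y ⟶ SpecR R}
    (hf : LocallyOfFiniteType f) (hg : LocallyOfFiniteType g) (φ : X ⟶ Y) (w : φ ≫ g = f),
    IsEtale φ →
    letI := T.top f hf
    letI := T.top g hg
    IsOpenMap (Pts.map φ w)

/-- `R` is proper-closed: proper morphisms of locally of finite type `R`-schemes
induce closed maps on `R`-points. -/
def ProperClosed {R : Type} [CommRing R] [TopologicalSpace R] (T : PointsTopology R) : Prop :=
  ∀ {X Y : Scheme} {f : X ⟶ SpecR R} {g : Y ⟶ SpecR R}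
    (hf : LocallyOfFiniteType f) (hg : LocallyOfFiniteType g) (φ : X ⟶ Y) (w : φ ≫ g = f),
    IsProper φ →
    letI := T.top f hf
    letI := T.top g hg
    IsClosedMap (Pts.map φ w)

/-- `R` is finite-closed: finite morphisms of locally of finite type `R`-schemes
induce closed maps on `R`-points. -/
def FiniteClosed {R : Type} [CommRing R] [TopologicalSpace R] (T : PointsTopology R) : Prop :=
  ∀ {X Y : Scheme} {f : X ⟶ SpecR R} {g : Y ⟶ SpecR R}
    (hf : LocallyOfFiniteType f) (hg : LocallyOfFiniteType g) (φ : X ⟶ Y) (w : φ ≫ g = f),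
    IsFinite φ →
    letI := T.top f hf
    letI := T.top g hg
    IsClosedMap (Pts.map φ w)

/-!
An immersion is a closed immersion into an open subscheme, so by (iii) and (iv) it induces a
topological embedding on `R`-points. For closedness of the image: as `Spec R` is local, every
`R`-point of `Y` lies in an affine open `Spec A`, and pulling back reduces to a quasi-compact
immersion `ψ : W ⟶ Spec A`. Its image is compact, hence covered by finitely many basic opens
`D(r)` inside the open set in which it is closed, and over each such `D(r)` the map `ψ` is a closed
immersion whose ideal is the kernel `I` of `A → Γ(W)` localized at `r` (as `W` is qcqs). So an
`R`-point `y` of `Spec A` comes from `W` iff `y` kills `I` and `y(r)` is a unit for one of the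
finitely many `r`. This is a closed condition: evaluation at `a ∈ A` is continuous, being the
composite `Spec A ⟶ 𝔸¹` on points, `R` is Hausdorff, and `Rˣ` is closed in `R`.
-/

namespace PrimeSpectrum

lemma exists_finite_basicOpen_cover {A : Type*} [CommRing A] {K U : Set (PrimeSpectrum A)}
    (hK : IsCompact K) (hU : IsOpen U) (hKU : K ⊆ U) :
    ∃ G : Set A, G.Finite ∧ (∀ r ∈ G, (basicOpen r : Set (PrimeSpectrum A)) ⊆ U) ∧
      K ⊆ ⋃ r ∈ G, (basicOpen r : Set (PrimeSpectrum A)) := by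
  have hcover : K ⊆ ⋃ r ∈ {r : A | (basicOpen r : Set (PrimeSpectrum A)) ⊆ U},
      (basicOpen r : Set (PrimeSpectrum A)) := by
    intro x hx
    obtain ⟨_, ⟨r, rfl⟩, hxr, hrU⟩ :=
      isTopologicalBasis_basic_opens.exists_subset_of_mem_open (hKU hx) hU
    exact Set.mem_biUnion hrU hxr
  obtain ⟨G, hGsub, hGfin, hKG⟩ :=
    hK.elim_finite_subcover_image (fun r _ => (basicOpen r).isOpen) hcover
  exact ⟨G, hGfin, hGsub, hKG⟩

end PrimeSpectrum

namespace AlgebraicGeometry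

lemma Scheme.Hom.ker_le_ker_of_isAffine {X Y Z : Scheme} [IsAffine Z] (f : X ⟶ Z) (g : Y ⟶ Z)
    (H : RingHom.ker f.appTop.hom ≤ RingHom.ker g.appTop.hom) : f.ker ≤ g.ker := by
  rw [Scheme.ker_of_isAffine, Scheme.ker_of_isAffine]
  exact (map_le_map_iff Scheme.IdealSheafData.equivOfIsAffine.symm).mpr H

lemma isClosedImmersion_morphismRestrict_of_subset_coborder {W Y : Scheme} (ψ : W ⟶ Y)
    [IsImmersion ψ] (U : Y.Opens) (hU : (U : Set Y) ⊆ coborder (Set.range ψ)) :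
    IsClosedImmersion (ψ ∣_ U) := by
  apply IsClosedImmersion.of_isPreimmersion
  have hbase : Set.range (ψ ∣_ U) = ((↑) : U → Y) ⁻¹' Set.range ψ := by
    rw [morphismRestrict_base]
    exact Set.range_restrictPreimage _ _
  rw [hbase]
  have hrange : ((↑) : U → Y) ⁻¹' Set.range ψ = (↑) ⁻¹' closure (Set.range ψ) := by
    ext x
    simp only [Set.mem_preimage]
    refine ⟨fun h => subset_closure h, fun h => ?_⟩
    rw [← coborder_inter_closure (s := Set.range ψ)]
    exact ⟨hU x.2, h⟩
  rw [hrange]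
  exact isClosed_closure.preimage continuous_subtype_val

lemma Scheme.Opens.topIso_hom_ι_appTop {X : Scheme} (U : X.Opens) (z : Γ(X, ⊤)) :
    U.topIso.hom (U.ι.appTop z) = z |_ U := by
  rw [Scheme.Opens.topIso_hom, Scheme.Opens.ι_appTop]
  erw [← CommRingCat.comp_apply, ← Functor.map_comp]
  rfl

lemma ker_appTop_morphismRestrict_basicOpen_le {W Y S : Scheme} [IsAffine Y] [CompactSpace W]
    [QuasiSeparatedSpace W] (ψ : W ⟶ Y) {r : Γ(Y, ⊤)} (u : S ⟶ Y.basicOpen r)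
    (hker : RingHom.ker ψ.appTop.hom ≤ RingHom.ker (u ≫ (Y.basicOpen r).ι).appTop.hom)
    (hunit : IsUnit ((u ≫ (Y.basicOpen r).ι).appTop r)) :
    RingHom.ker (ψ ∣_ Y.basicOpen r).appTop.hom ≤ RingHom.ker u.appTop.hom := by
  intro s hs
  rw [RingHom.mem_ker] at hs ⊢
  -- Write `s = b / r ^ n`. Then `b` vanishes on `ψ⁻¹ D(r) = D(ψ r)`, so, `W` being qcqs,
  -- `r ^ m * b` vanishes on `W` for some `m`.
  obtain ⟨⟨b, _, n, rfl⟩, hbn⟩ := IsLocalization.surj (Submonoid.powers r) s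
  change s * (Y.basicOpen r).ι.appTop (r ^ n) = (Y.basicOpen r).ι.appTop b at hbn
  have hres : ψ.appTop b |_ W.basicOpen (ψ.appTop r) = 0 := by
    have h0 : (ψ ∣_ Y.basicOpen r).appTop ((Y.basicOpen r).ι.appTop b) = 0 := by
      rw [← hbn, map_mul, hs, zero_mul]
    rw [← CommRingCat.comp_apply, ← Scheme.Hom.comp_appTop, morphismRestrict_ι,
      Scheme.Hom.comp_appTop, CommRingCat.comp_apply] at h0
    have hU : ψ ⁻¹ᵁ Y.basicOpen r = W.basicOpen (ψ.appTop r) := Scheme.preimage_basicOpen ψ r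
    rw [← hU, ← Scheme.Opens.topIso_hom_ι_appTop, h0, map_zero]
  obtain ⟨m, hm⟩ := exists_of_res_zero_of_qcqs_of_top hres
  have hb : (u ≫ (Y.basicOpen r).ι).appTop b = 0 := by
    have h0 : (u ≫ (Y.basicOpen r).ι).appTop (r ^ m * b) = 0 :=
      hker (by rwa [RingHom.mem_ker, map_mul, map_pow])
    rwa [map_mul, map_pow, (hunit.pow m).mul_right_eq_zero] at h0
  have hsb := congrArg u.appTop hbn
  rw [Scheme.Hom.comp_appTop, CommRingCat.comp_apply] at hb hunit
  simp only [map_mul, map_pow] at hsb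
  rwa [hb, (hunit.pow n).mul_left_eq_zero] at hsb

lemma exists_lift_of_isUnit_appTop {W Y S : Scheme} [IsAffine Y] (ψ : W ⟶ Y) [IsImmersion ψ]
    [QuasiCompact ψ] {r : Γ(Y, ⊤)} (hr : (Y.basicOpen r : Set Y) ⊆ coborder (Set.range ψ))
    (u : S ⟶ Y) (hker : RingHom.ker ψ.appTop.hom ≤ RingHom.ker u.appTop.hom)
    (hunit : IsUnit (u.appTop r)) :
    ∃ v : S ⟶ W, v ≫ ψ = u := by
  have : CompactSpace W := QuasiCompact.compactSpace_of_compactSpace ψ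
  have : QuasiSeparatedSpace W := quasiSeparatedSpace_of_quasiSeparated ψ
  have : IsClosedImmersion (ψ ∣_ Y.basicOpen r) :=
    isClosedImmersion_morphismRestrict_of_subset_coborder ψ _ hr
  have hu : Set.range u ⊆ Set.range (Y.basicOpen r).ι := by
    rintro _ ⟨x, rfl⟩
    rw [Scheme.Opens.range_ι]
    show x ∈ u ⁻¹ᵁ Y.basicOpen r
    rw [Scheme.preimage_basicOpen]
    exact (Scheme.basicOpen_of_isUnit _ hunit).symm ▸ trivial
  set u' := IsOpenImmersion.lift (Y.basicOpen r).ι u hu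
  have hu' : u' ≫ (Y.basicOpen r).ι = u := IsOpenImmersion.lift_fac _ _ _
  have hker' := ker_appTop_morphismRestrict_basicOpen_le ψ u' (hu' ▸ hker) (hu' ▸ hunit)
  refine ⟨IsClosedImmersion.lift _ u' (Scheme.Hom.ker_le_ker_of_isAffine _ _ hker') ≫
    (ψ ⁻¹ᵁ Y.basicOpen r).ι, ?_⟩
  rw [Category.assoc, ← morphismRestrict_ι, IsClosedImmersion.lift_fac_assoc, hu']

end AlgebraicGeometry

section Points

variable {R : Type} [CommRing R]

lemma Pts.map_map {X Y Z : Scheme} {f : X ⟶ SpecR R} {g : Y ⟶ SpecR R} {h : Z ⟶ SpecR R}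
    {a : X ⟶ Y} {b : Y ⟶ Z} {c : X ⟶ Z} (hc : a ≫ b = c) (wa : a ≫ g = f) (wb : b ≫ h = g)
    (wc : c ≫ h = f) (s : Pts f) :
    Pts.map b wb (Pts.map a wa s) = Pts.map c wc s :=
  Subtype.ext <| by simp only [Pts.map, Category.assoc, hc]

lemma Pts.preimage_range_map_of_isPullback {P X Y Z : Scheme} {fst : P ⟶ X} {snd : P ⟶ Z}
    {φ : X ⟶ Y} {i : Z ⟶ Y} (h : IsPullback fst snd φ i) {sP : P ⟶ SpecR R}
    {sX : X ⟶ SpecR R} {sY : Y ⟶ SpecR R} {sZ : Z ⟶ SpecR R} (wφ : φ ≫ sY = sX)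
    (wi : i ≫ sY = sZ) (wsnd : snd ≫ sZ = sP) :
    Pts.map i wi ⁻¹' Set.range (Pts.map φ wφ) = Set.range (Pts.map snd wsnd) := by
  ext z
  constructor
  · rintro ⟨x, hx⟩
    have hsq : x.1 ≫ φ = z.1 ≫ i := congrArg Subtype.val hx
    refine ⟨⟨h.lift x.1 z.1 hsq, ?_⟩, Subtype.ext (h.lift_snd _ _ _)⟩
    rw [← wsnd, h.lift_snd_assoc, z.2]
  · rintro ⟨p, rfl⟩
    refine ⟨⟨p.1 ≫ fst, ?_⟩, Subtype.ext ?_⟩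
    · rw [Category.assoc, ← wφ, h.w_assoc, wi, wsnd, p.2]
    · simp only [Pts.map, Category.assoc, h.w]

lemma range_subset_of_closedPoint_mem [IsLocalRing R] {Y : Scheme} (y : SpecR R ⟶ Y)
    {U : Set Y} (hU : IsOpen U) (hy : y (IsLocalRing.closedPoint R) ∈ U) : Set.range y ⊆ U := by
  rintro _ ⟨p, rfl⟩
  exact ((IsLocalRing.specializes_closedPoint p).map y.continuous).mem_open hU hy

lemma Pts.exists_map_eq_of_isOpenImmersion [IsLocalRing R] {Y Z : Scheme} {g : Y ⟶ SpecR R}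
    (i : Z ⟶ Y) [IsOpenImmersion i] (y : Pts g)
    (hy : y.1 (IsLocalRing.closedPoint R) ∈ Set.range i) :
    ∃ z : Pts (i ≫ g), Pts.map i rfl z = y := by
  have hrange := range_subset_of_closedPoint_mem y.1 i.isOpenEmbedding.isOpen_range hy
  refine ⟨⟨IsOpenImmersion.lift i y.1 hrange, ?_⟩, Subtype.ext (IsOpenImmersion.lift_fac _ _ _)⟩
  rw [IsOpenImmersion.lift_fac_assoc, y.2]

lemma locallyOfFiniteType_affineNStr (n : ℕ) : LocallyOfFiniteType (AffineNStr R n) :=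
  HasRingHomProperty.Spec_iff.mpr (RingHom.finiteType_algebraMap.mpr inferInstance)

def Pts.eval {A : CommRingCat} {sA : Spec A ⟶ SpecR R} (y : Pts sA) (a : A) : R :=
  Spec.preimage y.1 a

lemma Pts.eval_map_spec {A B : CommRingCat} {sA : Spec A ⟶ SpecR R} {sB : Spec B ⟶ SpecR R}
    (μ : B ⟶ A) (w : Spec.map μ ≫ sB = sA) (y : Pts sA) (b : B) :
    (Pts.map (Spec.map μ) w y).eval b = y.eval (μ b) := by
  have h : y.1 ≫ Spec.map μ = Spec.map (μ ≫ Spec.preimage y.1) := by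
    rw [Spec.map_comp, Spec.map_preimage]
  simp only [Pts.eval, Pts.map, h, Spec.preimage_map]
  rfl

lemma PointsTopology.continuous_eval [TopologicalSpace R] (T : PointsTopology R)
    {A : CommRingCat} {sA : Spec A ⟶ SpecR R} (hsA : LocallyOfFiniteType sA) (a : A) :
    letI := T.top sA hsA
    Continuous fun y : Pts sA => y.eval a := by
  let _ := T.top sA hsA
  let _ := T.top (AffineNStr R 1) (locallyOfFiniteType_affineNStr 1)
  let : Algebra R A := (Spec.preimage sA).hom.toAlgebra
  let μ : CommRingCat.of (MvPolynomial (Fin 1) R) ⟶ A :=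
    CommRingCat.ofHom (MvPolynomial.aeval fun _ => a).toRingHom
  have w : Spec.map μ ≫ AffineNStr R 1 = sA := by
    rw [AffineNStr, ← Spec.map_comp, ← Spec.map_preimage sA]
    congr 1
    ext r
    exact (MvPolynomial.aeval fun _ => a).commutes r
  have key : (fun y : Pts sA => y.eval a) =
      (fun v => v 0) ∘ affineCoords R 1 ∘ Pts.map (Spec.map μ) w := by
    funext y
    simp only [Function.comp_apply, affineCoords]
    rw [← Pts.eval, Pts.eval_map_spec]
    simp [μ]
  rw [key]
  exact (continuous_apply 0).comp ((T.affine_homeo 1 _).continuous.comp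
    (T.continuous_map hsA _ _ w))

lemma Pts.appTop_ΓSpecIso_inv {A : CommRingCat} {sA : Spec A ⟶ SpecR R} (y : Pts sA) (a : A) :
    y.1.appTop ((Scheme.ΓSpecIso A).inv a) = (Scheme.ΓSpecIso (.of R)).inv (y.eval a) := by
  have h := Scheme.ΓSpecIso_inv_naturality (Spec.preimage y.1)
  rw [Spec.map_preimage] at h
  exact congrArg (fun φ => φ a) h.symm

lemma Pts.isUnit_eval_iff [IsLocalRing R] {A : CommRingCat} {sA : Spec A ⟶ SpecR R} (y : Pts sA)
    (r : A) : IsUnit (y.eval r) ↔ y.1 (IsLocalRing.closedPoint R) ∈ PrimeSpectrum.basicOpen r := by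
  rw [← Spec.map_preimage y.1]
  exact (IsLocalRing.notMem_maximalIdeal).symm

lemma Pts.mem_range_map_iff [IsLocalRing R] {W : Scheme} {A : CommRingCat} (ψ : W ⟶ Spec A)
    [IsImmersion ψ] [QuasiCompact ψ] {sW : W ⟶ SpecR R} {sA : Spec A ⟶ SpecR R}
    (wψ : ψ ≫ sA = sW) {G : Set A}
    (hGsub : ∀ r ∈ G, (PrimeSpectrum.basicOpen r : Set (PrimeSpectrum A)) ⊆ coborder (Set.range ψ))
    (hGcov : Set.range ψ ⊆ ⋃ r ∈ G, (PrimeSpectrum.basicOpen r : Set (PrimeSpectrum A)))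
    (y : Pts sA) :
    y ∈ Set.range (Pts.map ψ wψ) ↔
      (∀ a, ψ.appTop ((Scheme.ΓSpecIso A).inv a) = 0 → y.eval a = 0) ∧
        ∃ r ∈ G, IsUnit (y.eval r) := by
  constructor
  · rintro ⟨x, rfl⟩
    refine ⟨fun a ha => ?_, ?_⟩
    · have h := Pts.appTop_ΓSpecIso_inv (Pts.map ψ wψ x) a
      rw [show (Pts.map ψ wψ x).1 = x.1 ≫ ψ from rfl, Scheme.Hom.comp_appTop,
        CommRingCat.comp_apply, ha, map_zero] at h
      simpa using congrArg (Scheme.ΓSpecIso (.of R)).hom h.symm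
    · obtain ⟨r, hrG, hr⟩ := Set.mem_iUnion₂.mp (hGcov ⟨x.1 (IsLocalRing.closedPoint R), rfl⟩)
      exact ⟨r, hrG, (Pts.isUnit_eval_iff _ r).mpr hr⟩
  · rintro ⟨hker, r, hrG, hr⟩
    have hker' : RingHom.ker ψ.appTop.hom ≤ RingHom.ker y.1.appTop.hom := by
      intro a ha
      obtain ⟨a, rfl⟩ : ∃ b, (Scheme.ΓSpecIso A).inv b = a := ⟨_, Iso.hom_inv_id_apply _ a⟩
      rw [RingHom.mem_ker, Pts.appTop_ΓSpecIso_inv, hker a ha, map_zero]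
    have hunit : IsUnit (y.1.appTop ((Scheme.ΓSpecIso A).inv r)) := by
      rw [Pts.appTop_ΓSpecIso_inv]
      exact hr.map _
    obtain ⟨v, hv⟩ := exists_lift_of_isUnit_appTop ψ
      (by rw [basicOpen_eq_of_affine]; exact hGsub r hrG) y.1 hker' hunit
    exact ⟨⟨v, by rw [← wψ, ← Category.assoc, hv, y.2]⟩, Subtype.ext hv⟩

end Points

namespace PointsTopology

variable {R : Type} [CommRing R] [TopologicalSpace R]

lemma isEmbedding_map_of_isImmersion (T : PointsTopology R) {X Y : Scheme} {f : X ⟶ SpecR R}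
    {g : Y ⟶ SpecR R} (hf : LocallyOfFiniteType f) (hg : LocallyOfFiniteType g) (φ : X ⟶ Y)
    (w : φ ≫ g = f) [IsImmersion φ] :
    letI := T.top f hf
    letI := T.top g hg
    IsEmbedding (Pts.map φ w) := by
  let _ := T.top f hf
  let _ := T.top g hg
  have hU : LocallyOfFiniteType (φ.coborderRange.ι ≫ g) := by
    have := hg
    infer_instance
  let _ := T.top _ hU
  have wc : φ.liftCoborder ≫ φ.coborderRange.ι ≫ g = f := by
    rw [← Category.assoc, Scheme.Hom.liftCoborder_ι, w]
  have hcomp : Pts.map φ w = Pts.map φ.coborderRange.ι rfl ∘ Pts.map φ.liftCoborder wc :=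
    funext fun s => (Pts.map_map φ.liftCoborder_ι wc rfl w s).symm
  rw [hcomp]
  exact (T.openImmersion_isOpenEmbedding hU hg _ rfl inferInstance).isEmbedding.comp
    (T.closedImmersion_isEmbedding hf hU _ wc inferInstance)

lemma isClosed_range_map_of_affine [IsLocalRing R] [T2Space R]
    (hclosed : IsClosed {x : R | IsUnit x}) (T : PointsTopology R) {W : Scheme} {A : CommRingCat}
    {sW : W ⟶ SpecR R} {sA : Spec A ⟶ SpecR R} (hsW : LocallyOfFiniteType sW)
    (hsA : LocallyOfFiniteType sA) (ψ : W ⟶ Spec A) (wψ : ψ ≫ sA = sW) [IsImmersion ψ]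
    [QuasiCompact ψ] :
    letI := T.top sW hsW
    letI := T.top sA hsA
    IsClosed (Set.range (Pts.map ψ wψ)) := by
  let _ := T.top sW hsW
  let _ := T.top sA hsA
  have : CompactSpace W := QuasiCompact.compactSpace_of_compactSpace ψ
  obtain ⟨G, hGfin, hGsub, hGcov⟩ := PrimeSpectrum.exists_finite_basicOpen_cover
    (isCompact_range ψ.continuous) ψ.isLocallyClosed_range.isOpen_coborder subset_coborder
  have hrange : Set.range (Pts.map ψ wψ) =
      (⋂ a ∈ {a : A | ψ.appTop ((Scheme.ΓSpecIso A).inv a) = 0},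
        (fun y : Pts sA => y.eval a) ⁻¹' {0}) ∩
      ⋃ r ∈ G, (fun y : Pts sA => y.eval r) ⁻¹' {x | IsUnit x} := by
    ext y
    simp [Pts.mem_range_map_iff ψ wψ hGsub hGcov y]
  rw [hrange]
  exact (isClosed_biInter fun a _ => isClosed_singleton.preimage (T.continuous_eval hsA a)).inter
    (hGfin.isClosed_biUnion fun r _ => hclosed.preimage (T.continuous_eval hsA r))

lemma isClosed_range_map [IsLocalRing R] [T2Space R] (hclosed : IsClosed {x : R | IsUnit x})
    (T : PointsTopology R) {X Y : Scheme} {f : X ⟶ SpecR R} {g : Y ⟶ SpecR R}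
    (hf : LocallyOfFiniteType f) (hg : LocallyOfFiniteType g) (φ : X ⟶ Y) (w : φ ≫ g = f)
    [IsImmersion φ] [QuasiCompact φ] :
    letI := T.top f hf
    letI := T.top g hg
    IsClosed (Set.range (Pts.map φ w)) := by
  let _ := T.top f hf
  let _ := T.top g hg
  rw [← isOpen_compl_iff, isOpen_iff_forall_mem_open]
  intro y hy
  let 𝒰 := Y.affineOpenCover
  let i := 𝒰.f (𝒰.idx (y.1 (IsLocalRing.closedPoint R)))
  obtain ⟨z, hz⟩ := Pts.exists_map_eq_of_isOpenImmersion i y (𝒰.covers _)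
  have hsZ : LocallyOfFiniteType (i ≫ g) := by
    have := hg
    infer_instance
  have hsP : LocallyOfFiniteType (pullback.fst φ i ≫ f) := by
    have := hf
    infer_instance
  let _ := T.top _ hsZ
  have wsnd : pullback.snd φ i ≫ i ≫ g = pullback.fst φ i ≫ f :=
    (pullback.condition_assoc g).symm.trans (congrArg (pullback.fst φ i ≫ ·) w)
  have hC : IsClosed (Pts.map i rfl ⁻¹' Set.range (Pts.map φ w)) := by
    rw [Pts.preimage_range_map_of_isPullback (IsPullback.of_hasPullback φ i) w rfl wsnd]
    exact T.isClosed_range_map_of_affine hclosed hsP hsZ _ wsnd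
  have hi := T.openImmersion_isOpenEmbedding hsZ hg i rfl inferInstance
  refine ⟨Pts.map i rfl '' (Pts.map i rfl ⁻¹' Set.range (Pts.map φ w))ᶜ, ?_,
    hi.isOpenMap _ hC.isOpen_compl, z, fun h => hy (hz ▸ h), hz⟩
  rintro _ ⟨s, hs, rfl⟩
  exact hs

end PointsTopology

theorem statement_9_general (R : Type) [CommRing R] [TopologicalSpace R]
    [IsLocalRing R] [T2Space R]
    (hclosed : IsClosed {x : R | IsUnit x})
    (T : PointsTopology R)
    {X Y : Scheme} {f : X ⟶ SpecR R} {g : Y ⟶ SpecR R}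
    (hf : LocallyOfFiniteType f) (hg : LocallyOfFiniteType g)
    (φ : X ⟶ Y) (w : φ ≫ g = f) [IsImmersion φ] [QuasiCompact φ] :
    letI := T.top f hf
    letI := T.top g hg
    IsClosedEmbedding (Pts.map φ w) := by
  let _ := T.top f hf
  let _ := T.top g hg
  exact ⟨T.isEmbedding_map_of_isImmersion hf hg φ w, T.isClosed_range_map hclosed hf hg φ w⟩

/-- over a Hausdorff local topological ring `R` with `R^×` open, closed, and a
topological group in the subspace topology, every quasi-compact immersion of locally of
finite type `R`-schemes induces a closed topological embedding on `R`-points. -/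
theorem statement_9 (R : Type) [CommRing R] [TopologicalSpace R] [IsTopologicalRing R]
    [IsLocalRing R] [T2Space R]
    (hunit : IsOpen {x : R | IsUnit x})
    (hinv : ContinuousOn (fun x : R => Ring.inverse x) {x : R | IsUnit x})
    (hclosed : IsClosed {x : R | IsUnit x})
    (T : PointsTopology R)
    {X Y : Scheme} {f : X ⟶ SpecR R} {g : Y ⟶ SpecR R}
    (hf : LocallyOfFiniteType f) (hg : LocallyOfFiniteType g)
    (φ : X ⟶ Y) (w : φ ≫ g = f) [IsImmersion φ] [QuasiCompact φ] :
    letI := T.top f hf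
    letI := T.top g hg
    IsClosedEmbedding (Pts.map φ w) :=
  statement_9_general R hclosed T hf hg φ w
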